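/- Any generating set of the free group of rank g consisting of exactly g elements is a free basis. -/

import Mathlib

/-!
Sending the free generators to the `g` given generators is a surjective endomorphism of `F_g`
(after identifying `S` with `Fin g`), and it is injective because finitely generated residually
finite groups are Hopfian: if `φ` is onto and `w ≠ 1` lies in its kernel, choose a finite quotient
`Q` in which `w` survives; precomposition with `φ` is an injective, hence bijective, self-map of the
finite set `Hom(G, Q)`, so the quotient map factors through `φ` and kills `w`.

Free groups are residually finite: a reduced word `L` of length `n` acts nontrivially on
`{0, …, n}` once each generator is chosen so that the `k`-th letter of `L` moves `k + 1` to `k`.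
These requirements are consistent because no letter of `L` is followed by its inverse.
-/

open Function Equiv Fin.NatCast

theorem Equiv.Perm.list_prod_apply_of_getElem_apply_succ {β : Type*} (ps : List (Perm β))
    (x : ℕ → β) (h : ∀ k (hk : k < ps.length), ps[k] (x (k + 1)) = x k) :
    ps.prod (x ps.length) = x 0 := by
  induction ps generalizing x with
  | nil => rfl
  | cons p ps ih =>
    rw [List.prod_cons, Perm.mul_apply, List.length_cons,
      ih (fun k => x (k + 1)) fun k hk => h (k + 1) (by simpa using hk)]
    exact h 0 (by simp)

theorem Fin.natCast_inj_of_le {n a b : ℕ} (ha : a ≤ n) (hb : b ≤ n) :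
    (a : Fin (n + 1)) = b ↔ a = b := by
  rw [Fin.ext_iff, Fin.val_cast_of_lt (by omega), Fin.val_cast_of_lt (by omega)]

namespace Equiv.Perm

def adjSwapProd (n : ℕ) (js : List ℕ) : Perm (Fin (n + 1)) :=
  (js.map fun k : ℕ => swap (k : Fin (n + 1)) ((k + 1 : ℕ) : Fin (n + 1))).prod

section adjSwapProd

variable {n : ℕ} {js : List ℕ}

theorem adjSwapProd_cons (k : ℕ) (js : List ℕ) :
    adjSwapProd n (k :: js) =
      swap (k : Fin (n + 1)) ((k + 1 : ℕ) : Fin (n + 1)) * adjSwapProd n js :=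
  List.prod_cons

theorem swap_natCast_succ_apply_of_ne {k x : ℕ} (hk : k < n) (hx : x ≤ n) (h₁ : k ≠ x)
    (h₂ : k + 1 ≠ x) :
    swap (k : Fin (n + 1)) ((k + 1 : ℕ) : Fin (n + 1)) x = x :=
  swap_apply_of_ne_of_ne (by rwa [Ne, Fin.natCast_inj_of_le hx hk.le, eq_comm])
    (by rwa [Ne, Fin.natCast_inj_of_le hx hk, eq_comm])

theorem adjSwapProd_apply_of_forall_ne (hjs : ∀ k ∈ js, k < n) {x : ℕ} (hx : x ≤ n)
    (hne : ∀ k ∈ js, k ≠ x ∧ k + 1 ≠ x) : adjSwapProd n js x = x := by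
  induction js with
  | nil => rfl
  | cons k js ih =>
    simp only [List.mem_cons, forall_eq_or_imp] at hjs hne
    rw [adjSwapProd_cons, Perm.mul_apply, ih hjs.2 hne.2]
    exact swap_natCast_succ_apply_of_ne hjs.1 hx hne.1.1 hne.1.2

/-- The swaps act from the largest `k` down, so `j` is moved once and then left alone. -/
theorem adjSwapProd_apply_of_mem (hjs : ∀ k ∈ js, k < n) (hsort : js.Pairwise (· < ·)) {j : ℕ}
    (hj : j ∈ js) : adjSwapProd n js j = (j + 1 : ℕ) := by
  induction js with
  | nil => simp at hj
  | cons k js ih =>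
    simp only [List.mem_cons, forall_eq_or_imp] at hjs
    rw [List.pairwise_cons] at hsort
    rw [adjSwapProd_cons, Perm.mul_apply]
    rcases List.mem_cons.1 hj with rfl | hj
    · rw [adjSwapProd_apply_of_forall_ne hjs.2 hjs.1.le fun m hm => by
        have := hsort.1 m hm; omega]
      exact swap_apply_left _ _
    · have := hsort.1 j hj
      rw [ih hjs.2 hsort.2 hj]
      exact swap_natCast_succ_apply_of_ne hjs.1 (hjs.2 j hj) (by omega) (by omega)

end adjSwapProd

end Equiv.Perm

namespace FreeGroup

variable {α : Type*} [DecidableEq α]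

def letterPositions (L : List (α × Bool)) (a : α × Bool) : List ℕ :=
  (List.range L.length).filter fun k => L[k]? = some a

theorem mem_letterPositions {L : List (α × Bool)} {a : α × Bool} {k : ℕ} :
    k ∈ letterPositions L a ↔ ∃ hk : k < L.length, L[k] = a := by
  simp [letterPositions, List.getElem?_eq_some_iff]

theorem letterPositions_pairwise (L : List (α × Bool)) (a : α × Bool) :
    (letterPositions L a).Pairwise (· < ·) :=
  List.pairwise_lt_range.filter _

def letterShift (L : List (α × Bool)) (a : α × Bool) : Perm (Fin (L.length + 1)) :=
  Perm.adjSwapProd L.length (letterPositions L a)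

def wordPerm (L : List (α × Bool)) (i : α) : Perm (Fin (L.length + 1)) :=
  letterShift L (i, false) * (letterShift L (i, true))⁻¹

theorem cond_wordPerm (L : List (α × Bool)) (a : α × Bool) :
    cond a.2 (wordPerm L a.1) (wordPerm L a.1)⁻¹ =
      letterShift L (a.1, !a.2) * (letterShift L a)⁻¹ := by
  obtain ⟨i, _ | _⟩ := a <;> simp [wordPerm]

theorem letterShift_mul_inv_apply_succ {L : List (α × Bool)} (hL : IsReduced L) {k : ℕ}
    (hk : k < L.length) :
    (letterShift L (L[k].1, !L[k].2) * (letterShift L L[k])⁻¹) (k + 1 : ℕ) = k := by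
  have hlt : ∀ a, ∀ m ∈ letterPositions L a, m < L.length := fun a m hm =>
    (mem_letterPositions.1 hm).1
  rw [Perm.mul_apply, Perm.inv_eq_iff_eq.2 ?_]
  · refine Perm.adjSwapProd_apply_of_forall_ne (hlt _) hk.le fun m hm => ?_
    obtain ⟨hm, hLm⟩ := mem_letterPositions.1 hm
    refine ⟨fun hmk => ?_, fun hmk => ?_⟩
    · subst hmk
      simp [Prod.ext_iff] at hLm
    · subst hmk
      -- the inverse of `L[m + 1]` cannot stand at position `m` of a reduced word
      have := hL.getElem m hk
      rw [hLm] at this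
      simp at this
  · exact (Perm.adjSwapProd_apply_of_mem (hlt _) (letterPositions_pairwise _ _)
      (mem_letterPositions.2 ⟨hk, rfl⟩)).symm

theorem lift_wordPerm_mk_apply {L : List (α × Bool)} (hL : IsReduced L) :
    lift (wordPerm L) (mk L) (L.length : Fin (L.length + 1)) = 0 := by
  rw [lift_mk]
  have := Perm.list_prod_apply_of_getElem_apply_succ
    (L.map fun a => cond a.2 (wordPerm L a.1) (wordPerm L a.1)⁻¹)
    (fun k : ℕ => (k : Fin (L.length + 1))) fun k hk => by
      rw [List.getElem_map, cond_wordPerm]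
      exact letterShift_mul_inv_apply_succ hL _
  simpa only [List.length_map, Nat.cast_zero] using this

end FreeGroup

instance FreeGroup.residuallyFinite {α : Type*} : Group.ResiduallyFinite (FreeGroup α) := by
  classical
  refine Group.residuallyFinite_of_forall_exists_finite_monoidHom fun w hw => ?_
  refine ⟨_, _, inferInstance, FreeGroup.lift (FreeGroup.wordPerm w.toWord), fun h => hw ?_⟩
  have := FreeGroup.lift_wordPerm_mk_apply (FreeGroup.isReduced_toWord (x := w))
  rw [FreeGroup.mk_toWord, h, Perm.one_apply] at this
  have hlen : w.toWord.length = 0 :=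
    (Fin.natCast_inj_of_le le_rfl (Nat.zero_le _)).1 (by rwa [Nat.cast_zero])
  exact FreeGroup.toWord_eq_nil_iff.1 (List.length_eq_zero_iff.1 hlen)

instance MonoidHom.finite_of_fg {G M : Type*} [Group G] [Group.FG G] [Monoid M] [Finite M] :
    Finite (G →* M) := by
  obtain ⟨s, hs⟩ := Group.FG.out (G := G)
  exact .of_injective (fun f (x : s) => f x) fun f f' h =>
    MonoidHom.eq_of_eqOn_dense hs fun x hx => congrFun h ⟨x, hx⟩

theorem Group.ResiduallyFinite.injective_of_surjective {G : Type*} [Group G] [Group.FG G]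
    [Group.ResiduallyFinite G] {φ : G →* G} (hφ : Surjective φ) : Injective φ := by
  refine (injective_iff_map_eq_one φ).2 fun w hw => ?_
  by_contra hne
  obtain ⟨H, hwH⟩ := Group.exists_finiteIndexNormalSubgroup_notMem w hne
  have hcomp : Injective fun f : G →* G ⧸ H.toSubgroup => f.comp φ := fun f f' h =>
    MonoidHom.ext fun x => by
      obtain ⟨y, rfl⟩ := hφ x
      exact DFunLike.congr_fun h y
  obtain ⟨f, hf⟩ := Finite.injective_iff_surjective.1 hcomp (QuotientGroup.mk' H.toSubgroup)
  have : (w : G ⧸ H.toSubgroup) = 1 := by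
    rw [← QuotientGroup.mk'_apply, ← hf, MonoidHom.comp_apply, hw, map_one]
  exact hwH ((QuotientGroup.eq_one_iff w).1 this)

theorem FreeGroup.lift_subtype_val_bijective {α : Type*} [Finite α] {S : Set (FreeGroup α)}
    (hcard : Nat.card S = Nat.card α) (hgen : Subgroup.closure S = ⊤) :
    Bijective (FreeGroup.lift ((↑) : S → FreeGroup α)) := by
  have : Finite S := by
    rcases isEmpty_or_nonempty α with hα | hα
    · infer_instance -- `FreeGroup α` is trivial
    · exact Nat.finite_of_card_ne_zero (hcard ▸ Nat.card_pos.ne')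
  obtain ⟨e⟩ := Finite.card_eq.1 hcard
  have hsurj : Surjective (FreeGroup.lift ((↑) : S → FreeGroup α)) :=
    FreeGroup.lift_surjective_iff_closure_range_eq_top.2 (by rwa [Subtype.range_coe])
  let c := FreeGroup.freeGroupCongr e.symm
  have hinj : Injective ((FreeGroup.lift ((↑) : S → FreeGroup α)).comp c.toMonoidHom) :=
    Group.ResiduallyFinite.injective_of_surjective (hsurj.comp c.surjective)
  exact ⟨Injective.of_comp_right (g := c) hinj c.surjective, hsurj⟩

/-- Any generating set of the free group of rank `g` consisting of exactly `g` elements is a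
free basis: the inclusion extends to an isomorphism from the free group on that set. -/
theorem stmt_12 (g : ℕ) (S : Set (FreeGroup (Fin g)))
    (hcard : Nat.card S = g) (hgen : Subgroup.closure S = ⊤) :
    ∃ e : FreeGroup S ≃* FreeGroup (Fin g),
      ∀ x : S, e (FreeGroup.of x) = (x : FreeGroup (Fin g)) :=
  ⟨MulEquiv.ofBijective _ (FreeGroup.lift_subtype_val_bijective (by simpa using hcard) hgen),
    fun _ => FreeGroup.lift_apply_of⟩
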